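/- arXiv:2103.15675 — 2 statements merged into one kernel-verified Lean document; each statement's English description precedes it below -/
import Mathlib

section
/- Every Lie group automorphism of SL_2(R) is of the form g ↦ h g h^{-1} for some matrix h ∈ GL_2(R). -/
open MatrixGroups

/-- The natural topology on `SL₂(ℝ)`, induced from the space of matrices. -/
noncomputable instance : TopologicalSpace (Matrix.SpecialLinearGroup (Fin 2) ℝ) :=
  TopologicalSpace.induced
    (fun g : Matrix.SpecialLinearGroup (Fin 2) ℝ => (g : Matrix (Fin 2) (Fin 2) ℝ))
    inferInstance

set_option linter.unnecessarySeqFocus false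
set_option linter.unreachableTactic false
set_option linter.unusedTactic false

namespace SL2Aux

open Matrix

abbrev M2 := Matrix (Fin 2) (Fin 2) ℝ

def uu (t : ℝ) : SL(2, ℝ) := ⟨!![1, t; 0, 1], by simp [Matrix.det_fin_two_of]⟩
def ll (t : ℝ) : SL(2, ℝ) := ⟨!![1, 0; t, 1], by simp [Matrix.det_fin_two_of]⟩
noncomputable def dd (x : ℝ) (hx : x ≠ 0) : SL(2, ℝ) :=
  ⟨!![x, 0; 0, x⁻¹], by rw [Matrix.det_fin_two_of]; field_simp; simp⟩

lemma coe_uu (t : ℝ) : ((uu t : SL(2, ℝ)) : M2) = !![1, t; 0, 1] := rfl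
lemma coe_ll (t : ℝ) : ((ll t : SL(2, ℝ)) : M2) = !![1, 0; t, 1] := rfl
lemma coe_dd (x : ℝ) (hx : x ≠ 0) : ((dd x hx : SL(2, ℝ)) : M2) = !![x, 0; 0, x⁻¹] := rfl

lemma uu_mul (s t : ℝ) : uu s * uu t = uu (s + t) := by
  ext i j
  simp only [coe_uu, Matrix.SpecialLinearGroup.coe_mul]
  fin_cases i <;> fin_cases j <;> simp [Matrix.mul_apply, Fin.sum_univ_two] <;> ring

lemma ll_mul (s t : ℝ) : ll s * ll t = ll (s + t) := by
  ext i j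
  simp only [coe_ll, Matrix.SpecialLinearGroup.coe_mul]
  fin_cases i <;> fin_cases j <;> simp [Matrix.mul_apply, Fin.sum_univ_two] <;> ring

lemma uu_zero : uu 0 = 1 := by
  ext i j; fin_cases i <;> fin_cases j <;> simp [uu]

lemma ll_zero : ll 0 = 1 := by
  ext i j; fin_cases i <;> fin_cases j <;> simp [ll]

lemma uu_comm (s t : ℝ) : uu s * uu t = uu t * uu s := by
  rw [uu_mul, uu_mul, add_comm]

lemma rel_w (t : ℝ) :
    ll t * (uu 1 * ll (-1) * uu 1) = (uu 1 * ll (-1) * uu 1) * uu (-t) := by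
  ext i j
  simp only [coe_uu, coe_ll, Matrix.SpecialLinearGroup.coe_mul]
  fin_cases i <;> fin_cases j <;> simp [Matrix.mul_apply, Fin.sum_univ_two]

lemma dd_uu (x : ℝ) (hx : x ≠ 0) (t : ℝ) :
    dd x hx * uu t = uu (x * x * t) * dd x hx := by
  ext i j
  simp only [coe_uu, coe_dd, Matrix.SpecialLinearGroup.coe_mul]
  fin_cases i <;> fin_cases j <;> simp [Matrix.mul_apply, Fin.sum_univ_two] <;>
    field_simp <;> ring

lemma uu_conj (s : ℝ) (hs : 0 < s) :
    ∃ d : SL(2, ℝ), uu s = d * uu 1 * d⁻¹ := by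
  have hx : Real.sqrt s ≠ 0 := ne_of_gt (Real.sqrt_pos.2 hs)
  refine ⟨dd (Real.sqrt s) hx, ?_⟩
  rw [eq_mul_inv_iff_mul_eq]
  rw [dd_uu]
  congr 2
  rw [mul_one, Real.mul_self_sqrt hs.le]

lemma ll_conj (s : ℝ) (hs : 0 < s) :
    ∃ d : SL(2, ℝ), ll s = d * ll 1 * d⁻¹ := by
  have hx : (Real.sqrt s)⁻¹ ≠ 0 := inv_ne_zero (ne_of_gt (Real.sqrt_pos.2 hs))
  refine ⟨dd (Real.sqrt s)⁻¹ hx, ?_⟩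
  rw [eq_mul_inv_iff_mul_eq]
  ext i j
  simp only [coe_ll, coe_dd, Matrix.SpecialLinearGroup.coe_mul]
  fin_cases i <;> fin_cases j <;>
    simp [Matrix.mul_apply, Fin.sum_univ_two] <;> field_simp <;>
    exact (Real.sq_sqrt hs.le).symm

lemma uu_one_ne_one : uu 1 ≠ 1 := by
  intro h
  have := congrFun (congrFun (congrArg (Subtype.val) h) 0) 1
  simp [uu] at this

lemma ll_uu_ne : ll 1 * uu 1 ≠ uu 1 * ll 1 := by
  intro h
  have := congrFun (congrFun (congrArg (Subtype.val) h) 0) 0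
  simp [coe_ll, coe_uu, Matrix.SpecialLinearGroup.coe_mul, Matrix.mul_apply, Fin.sum_univ_two] at this

lemma det_g (g : SL(2, ℝ)) :
    (↑g : M2) 0 0 * (↑g : M2) 1 1 - (↑g : M2) 0 1 * (↑g : M2) 1 0 = 1 := by
  have := g.2
  rw [Matrix.det_fin_two] at this
  exact this

lemma SL2_decomp (g : SL(2, ℝ)) (hc : (↑g : M2) 1 0 ≠ 0) :
    g = uu (((↑g : M2) 0 0 - 1) / (↑g : M2) 1 0) * ll ((↑g : M2) 1 0) *
      uu (((↑g : M2) 1 1 - 1) / (↑g : M2) 1 0) := by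
  have hdet := det_g g
  ext i j
  simp only [coe_uu, coe_ll, Matrix.SpecialLinearGroup.coe_mul]
  fin_cases i <;> fin_cases j <;>
    simp [Matrix.mul_apply, Fin.sum_univ_two] <;> field_simp <;> nlinarith [hdet]

lemma SL2_generated (P : SL(2, ℝ) → Prop)
    (hmul : ∀ a b, P a → P b → P (a * b))
    (hu : ∀ t, P (uu t)) (hl : ∀ t, P (ll t)) : ∀ g, P g := by
  have key : ∀ g : SL(2, ℝ), (↑g : M2) 1 0 ≠ 0 → P g := by
    intro g hc
    rw [SL2_decomp g hc]
    exact hmul _ _ (hmul _ _ (hu _) (hl _)) (hu _)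
  intro g
  by_cases hc : (↑g : M2) 1 0 ≠ 0
  · exact key g hc
  · push_neg at hc
    have h11 : (↑g : M2) 1 1 ≠ 0 := by
      have hdet := det_g g
      intro h; rw [hc, h] at hdet; simp at hdet
    have h2 : (↑(g * ll 1) : M2) 1 0 ≠ 0 := by
      simp only [coe_ll, Matrix.SpecialLinearGroup.coe_mul]
      simp [Matrix.mul_apply, Fin.sum_univ_two, hc, h11]
    have : g = (g * ll 1) * ll (-1) := by
      have h3 : ll 1 * ll (-1) = 1 := by rw [ll_mul]; norm_num; exact ll_zero
      rw [mul_assoc, h3, mul_one]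
    rw [this]
    exact hmul _ _ (key _ h2) (hl _)

lemma continuous_coeSL : Continuous
    (fun g : SL(2, ℝ) => (g : M2)) := continuous_induced_dom

lemma continuous_uu : Continuous uu := by
  apply continuous_induced_rng.2
  apply continuous_pi; intro i; apply continuous_pi; intro j
  fin_cases i <;> fin_cases j <;> simp [uu] <;> fun_prop

lemma continuous_ll : Continuous ll := by
  apply continuous_induced_rng.2
  apply continuous_pi; intro i; apply continuous_pi; intro j
  fin_cases i <;> fin_cases j <;> simp [ll] <;> fun_prop

lemma trace_two (φ : SL(2, ℝ) ≃* SL(2, ℝ)) (hφ : Continuous (⇑φ))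
    (v : ℝ → SL(2, ℝ)) (hv : Continuous v) (hv0 : v 0 = 1)
    (hconj : ∀ s : ℝ, 0 < s → ∃ d : SL(2, ℝ), v s = d * v 1 * d⁻¹) :
    Matrix.trace (↑(φ (v 1)) : M2) = 2 := by
  set f : ℝ → ℝ := fun t => Matrix.trace (↑(φ (v t)) : M2) with hf
  have hfc : Continuous f :=
    (continuous_coeSL.comp (hφ.comp hv)).matrix_trace
  have hfs : ∀ s : ℝ, 0 < s → f s = f 1 := by
    intro s hs
    obtain ⟨d, hd⟩ := hconj s hs
    have : φ (v s) = φ d * φ (v 1) * (φ d)⁻¹ := by rw [hd]; simp [mul_assoc]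
    simp only [hf, this]
    rw [Matrix.SpecialLinearGroup.coe_mul, Matrix.SpecialLinearGroup.coe_mul]
    rw [Matrix.trace_mul_cycle]
    rw [← Matrix.SpecialLinearGroup.coe_mul, ← Matrix.SpecialLinearGroup.coe_mul,
      inv_mul_cancel, one_mul]
  have h1 : Filter.Tendsto (fun n : ℕ => f (1 / (n + 1))) Filter.atTop (nhds (f 0)) :=
    (hfc.tendsto 0).comp tendsto_one_div_add_atTop_nhds_zero_nat
  have h2 : (fun n : ℕ => f (1 / (n + 1))) = fun _ => f 1 := by
    funext n
    exact hfs _ (by positivity)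
  rw [h2] at h1
  have heq : f 1 = f 0 := tendsto_nhds_unique tendsto_const_nhds h1
  have : f 0 = 2 := by
    simp only [hf, hv0, _root_.map_one]
    rw [Matrix.SpecialLinearGroup.coe_one, Matrix.trace_one]
    simp
  rw [← heq] at this
  exact this

lemma cayley (X : M2) (htr : Matrix.trace X = 2) (hdet : X.det = 1) :
    (X - 1) * (X - 1) = 0 := by
  rw [Matrix.trace_fin_two] at htr
  rw [Matrix.det_fin_two] at hdet
  ext i j
  fin_cases i <;> fin_cases j <;>
    simp only [Matrix.mul_apply, Fin.sum_univ_two, Matrix.sub_apply, Matrix.one_apply,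
      Matrix.zero_apply] <;> norm_num
  · linear_combination (X 0 0) * htr - hdet
  · linear_combination (X 0 1) * htr
  · linear_combination (X 1 0) * htr
  · linear_combination (X 1 1) * htr - hdet

lemma nilp_conj (N : M2) (hN : N * N = 0) (hN0 : N ≠ 0) :
    ∃ Q : M2, Q.det ≠ 0 ∧ N * Q = Q * !![0, 1; 0, 0] := by
  have h00 : N 0 0 * N 0 0 + N 0 1 * N 1 0 = 0 := by
    have := congrFun (congrFun hN 0) 0
    simpa [Matrix.mul_apply, Fin.sum_univ_two] using this
  have h10 : N 1 0 * N 0 0 + N 1 1 * N 1 0 = 0 := by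
    have := congrFun (congrFun hN 1) 0
    simpa [Matrix.mul_apply, Fin.sum_univ_two] using this
  have h11 : N 1 0 * N 0 1 + N 1 1 * N 1 1 = 0 := by
    have := congrFun (congrFun hN 1) 1
    simpa [Matrix.mul_apply, Fin.sum_univ_two] using this
  by_cases hr : N 1 0 = 0
  · have ha : N 0 0 = 0 := by
      have : N 0 0 * N 0 0 = 0 := by rw [hr] at h00; linarith
      exact mul_self_eq_zero.mp this
    have hd : N 1 1 = 0 := by
      have : N 1 1 * N 1 1 = 0 := by rw [hr] at h11; linarith
      exact mul_self_eq_zero.mp this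
    have hq : N 0 1 ≠ 0 := by
      intro hq
      apply hN0
      ext i j; fin_cases i <;> fin_cases j <;> simp [ha, hd, hq, hr]
    refine ⟨!![N 0 1, 0; 0, 1], ?_, ?_⟩
    · rw [Matrix.det_fin_two]; simpa using hq
    · ext i j
      fin_cases i <;> fin_cases j <;>
        simp [Matrix.mul_apply, Fin.sum_univ_two, ha, hd, hr]
  · refine ⟨!![N 0 0, 1; N 1 0, 0], ?_, ?_⟩
    · rw [Matrix.det_fin_two]; simpa using hr
    · ext i j
      fin_cases i <;> fin_cases j <;>
        simp [Matrix.mul_apply, Fin.sum_univ_two] <;> linarith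

lemma centralizer_e12 (X : M2) (hdet : X.det = 1)
    (hcomm : X * !![0, 1; 0, 0] = !![0, 1; 0, 0] * X) :
    X 1 0 = 0 ∧ X 1 1 = X 0 0 ∧ X 0 0 * X 0 0 = 1 := by
  have h1 := congrFun (congrFun hcomm 0) 1
  have h2 := congrFun (congrFun hcomm 1) 1
  have h3 := congrFun (congrFun hcomm 0) 0
  simp [Matrix.mul_apply, Fin.sum_univ_two] at h1 h2 h3
  rw [Matrix.det_fin_two] at hdet
  refine ⟨h3.symm, h1.symm, ?_⟩
  linear_combination hdet + X 0 0 * h1 + X 0 1 * h2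

lemma conj_mul_conj (Qi Q A B : M2) (h : Q * Qi = 1) :
    (Qi * A * Q) * (Qi * B * Q) = Qi * (A * B) * Q := by
  calc (Qi * A * Q) * (Qi * B * Q) = Qi * A * (Q * Qi) * B * Q := by
        simp only [Matrix.mul_assoc]
    _ = Qi * (A * B) * Q := by rw [h, Matrix.mul_one]; simp only [Matrix.mul_assoc]

lemma conj_inj (Qi Q A B : M2) (h1 : Q * Qi = 1)
    (h : Qi * A * Q = Qi * B * Q) : A = B := by
  have e : ∀ X : M2, Q * (Qi * X * Q) * Qi = X := by
    intro X
    calc Q * (Qi * X * Q) * Qi = (Q * Qi) * X * (Q * Qi) := by simp only [Matrix.mul_assoc]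
      _ = X := by rw [h1, Matrix.one_mul, Matrix.mul_one]
  rw [← e A, ← e B, h]

end SL2Aux

open SL2Aux Matrix

/-- Every Lie group (i.e. continuous) automorphism of `SL₂(ℝ)` is conjugation
by some matrix `h ∈ GL₂(ℝ)`. -/
theorem stmt5 (φ : SL(2, ℝ) ≃* SL(2, ℝ)) (hφ : Continuous (⇑φ)) :
    ∃ h : GL (Fin 2) ℝ, ∀ g : SL(2, ℝ),
      (↑(φ g) : Matrix (Fin 2) (Fin 2) ℝ)
        = (↑h : Matrix (Fin 2) (Fin 2) ℝ) * (↑g : Matrix (Fin 2) (Fin 2) ℝ)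
            * (↑h⁻¹ : Matrix (Fin 2) (Fin 2) ℝ) := by
  classical
  set ρ : SL(2, ℝ) → M2 := fun g => ↑(φ g) with hρdef
  have hρmul : ∀ g₁ g₂, ρ (g₁ * g₂) = ρ g₁ * ρ g₂ := by
    intro g₁ g₂
    simp only [hρdef, _root_.map_mul, Matrix.SpecialLinearGroup.coe_mul]
  have hρone : ρ 1 = 1 := by
    simp only [hρdef, _root_.map_one, Matrix.SpecialLinearGroup.coe_one]
  have hρdet : ∀ g, (ρ g).det = 1 := fun g => (φ g).2
  have hρinj : ∀ g₁ g₂, ρ g₁ = ρ g₂ → g₁ = g₂ := by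
    intro g₁ g₂ h
    exact φ.injective (Subtype.coe_injective h)
  -- trace facts
  have htru : Matrix.trace (ρ (uu 1)) = 2 :=
    trace_two φ hφ uu continuous_uu uu_zero uu_conj
  have htrl : Matrix.trace (ρ (ll 1)) = 2 :=
    trace_two φ hφ ll continuous_ll ll_zero ll_conj
  -- conjugating matrix Q
  obtain ⟨Q, hQdet, hQN⟩ := nilp_conj (ρ (uu 1) - 1)
    (cayley _ htru (hρdet _))
    (by
      intro h
      rw [sub_eq_zero] at h
      exact uu_one_ne_one (hρinj _ _ (h.trans hρone.symm)))
  have hQu : IsUnit Q.det := isUnit_iff_ne_zero.2 hQdet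
  have hQQ : Q⁻¹ * Q = 1 := Matrix.nonsing_inv_mul Q hQu
  have hQQ' : Q * Q⁻¹ = 1 := Matrix.mul_nonsing_inv Q hQu
  set σ : SL(2, ℝ) → M2 := fun g => Q⁻¹ * ρ g * Q with hσdef
  have hσmul : ∀ g₁ g₂, σ (g₁ * g₂) = σ g₁ * σ g₂ := by
    intro g₁ g₂
    simp only [hσdef, hρmul]
    rw [conj_mul_conj _ _ _ _ hQQ']
  have hσone : σ 1 = 1 := by
    simp only [hσdef, hρone, Matrix.mul_one]
    exact hQQ
  have hσinj : ∀ g₁ g₂, σ g₁ = σ g₂ → g₁ = g₂ := by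
    intro g₁ g₂ h
    exact hρinj _ _ (conj_inj _ _ _ _ hQQ' h)
  have hσdet : ∀ g, (σ g).det = 1 := by
    intro g
    simp only [hσdef, Matrix.det_mul, hρdet g, mul_one]
    rw [mul_comm, ← Matrix.det_mul, hQQ', Matrix.det_one]
  have hσu1 : σ (uu 1) = 1 + !![0, 1; 0, 0] := by
    have h1 : ρ (uu 1) * Q = Q * (1 + !![0, 1; 0, 0]) := by
      have h2 : ρ (uu 1) * Q - Q = Q * !![0, 1; 0, 0] := by
        rw [← hQN, Matrix.sub_mul, Matrix.one_mul]
      rw [Matrix.mul_add, Matrix.mul_one, ← h2]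
      abel
    simp only [hσdef]
    rw [Matrix.mul_assoc, h1, ← Matrix.mul_assoc, hQQ, Matrix.one_mul]
  -- form of σ (uu t)
  have hcomm : ∀ t, σ (uu t) * !![0, 1; 0, 0] = !![0, 1; 0, 0] * σ (uu t) := by
    intro t
    have h1 : σ (uu t) * σ (uu 1) = σ (uu 1) * σ (uu t) := by
      rw [← hσmul, ← hσmul, uu_comm]
    rw [hσu1] at h1
    simp only [Matrix.mul_add, Matrix.add_mul, Matrix.mul_one, Matrix.one_mul] at h1
    exact add_left_cancel h1
  have hcen := fun t => centralizer_e12 (σ (uu t)) (hσdet _) (hcomm t)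
  have hx1 : ∀ t, σ (uu t) 0 0 = 1 := by
    intro t
    obtain ⟨h10, h11, hsq⟩ := hcen t
    obtain ⟨g10, g11, gsq⟩ := hcen (t / 2)
    have hsplit : σ (uu t) = σ (uu (t / 2)) * σ (uu (t / 2)) := by
      rw [← hσmul, uu_mul, add_halves]
    have h00 : σ (uu t) 0 0
        = σ (uu (t / 2)) 0 0 * σ (uu (t / 2)) 0 0
          + σ (uu (t / 2)) 0 1 * σ (uu (t / 2)) 1 0 := by
      rw [hsplit]; simp [Matrix.mul_apply, Fin.sum_univ_two]
    rw [g10, mul_zero, add_zero] at h00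
    nlinarith [hsq, h00, sq_nonneg (σ (uu (t / 2)) 0 0)]
  have hform : ∀ t, σ (uu t) = !![1, σ (uu t) 0 1; 0, 1] := by
    intro t
    obtain ⟨h10, h11, hsq⟩ := hcen t
    ext i j
    fin_cases i <;> fin_cases j <;>
      simp [hx1 t, h10, h11.trans (hx1 t)]
  have hcadd : ∀ s t, σ (uu (s + t)) 0 1 = σ (uu s) 0 1 + σ (uu t) 0 1 := by
    intro s t
    have h1 : σ (uu (s + t)) = σ (uu s) * σ (uu t) := by rw [← hσmul, uu_mul]
    have h2 := congrFun (congrFun h1 0) 1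
    rw [hform s, hform t] at h2
    simp [Matrix.mul_apply, Fin.sum_univ_two] at h2
    linarith [h2]
  have hc1 : σ (uu 1) 0 1 = 1 := by
    rw [hσu1]; simp [Matrix.add_apply, Matrix.one_apply]
  have hc0 : σ (uu 0) 0 1 = 0 := by
    rw [uu_zero, hσone]; simp [Matrix.one_apply]
  have hcneg : ∀ t, σ (uu (-t)) 0 1 = -(σ (uu t) 0 1) := by
    intro t
    have := hcadd t (-t)
    rw [add_neg_cancel, hc0] at this
    linarith
  -- the matrix M for ll 1
  have htrT : Matrix.trace (σ (ll 1)) = 2 := by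
    simp only [hσdef]
    rw [Matrix.trace_mul_cycle, hQQ', Matrix.one_mul]
    exact htrl
  have hM2 : (σ (ll 1) - 1) * (σ (ll 1) - 1) = 0 := cayley _ htrT (hσdet _)
  set M : M2 := σ (ll 1) - 1 with hMdef
  have e00 : M 0 0 * M 0 0 + M 0 1 * M 1 0 = 0 := by
    have := congrFun (congrFun hM2 0) 0
    simpa [Matrix.mul_apply, Fin.sum_univ_two] using this
  have e10 : M 1 0 * M 0 0 + M 1 1 * M 1 0 = 0 := by
    have := congrFun (congrFun hM2 1) 0
    simpa [Matrix.mul_apply, Fin.sum_univ_two] using this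
  have e11 : M 1 0 * M 0 1 + M 1 1 * M 1 1 = 0 := by
    have := congrFun (congrFun hM2 1) 1
    simpa [Matrix.mul_apply, Fin.sum_univ_two] using this
  have hTM : σ (ll 1) = 1 + M := by rw [hMdef]; abel
  have hm0 : M 1 0 ≠ 0 := by
    intro hm
    have ha : M 0 0 = 0 := mul_self_eq_zero.mp (by rw [hm] at e00; linarith)
    have hd : M 1 1 = 0 := mul_self_eq_zero.mp (by rw [hm] at e11; linarith)
    have hTcomm : σ (ll 1) * !![0, 1; 0, 0] = !![0, 1; 0, 0] * σ (ll 1) := by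
      rw [hTM]
      ext i j
      fin_cases i <;> fin_cases j <;>
        simp [Matrix.mul_apply, Fin.sum_univ_two, Matrix.add_apply, Matrix.one_apply,
          hm, ha, hd]
    have : σ (ll 1 * uu 1) = σ (uu 1 * ll 1) := by
      rw [hσmul, hσmul, hσu1]
      simp only [Matrix.mul_add, Matrix.add_mul, Matrix.mul_one, Matrix.one_mul, hTcomm]
    exact ll_uu_ne (hσinj _ _ this)
  have hd' : M 1 1 = -M 0 0 := by
    have h2 : M 1 0 * (M 0 0 + M 1 1) = 0 := by linear_combination e10
    rcases mul_eq_zero.mp h2 with h' | h'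
    · exact absurd h' hm0
    · linarith
  -- second conjugation
  set P : M2 := !![1, M 0 0; 0, M 1 0] with hPdef
  set P' : M2 := !![1, -(M 0 0 / M 1 0); 0, (M 1 0)⁻¹] with hP'def
  have hPP' : P * P' = 1 := by
    ext i j
    fin_cases i <;> fin_cases j <;>
      simp [hPdef, hP'def, Matrix.mul_apply, Fin.sum_univ_two, Matrix.one_apply] <;>
      field_simp <;> ring
  have hP'P : P' * P = 1 := by
    ext i j
    fin_cases i <;> fin_cases j <;>
      simp [hPdef, hP'def, Matrix.mul_apply, Fin.sum_univ_two, Matrix.one_apply] <;>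
      field_simp <;> ring
  have hMP : M * P = P * !![0, 0; 1, 0] := by
    ext i j
    fin_cases i <;> fin_cases j <;>
      simp [hPdef, Matrix.mul_apply, Fin.sum_univ_two]
    · linarith [e00]
    · rw [hd']; ring
  set τ : SL(2, ℝ) → M2 := fun g => P' * σ g * P with hτdef
  have hτmul : ∀ g₁ g₂, τ (g₁ * g₂) = τ g₁ * τ g₂ := by
    intro g₁ g₂
    simp only [hτdef, hσmul]
    rw [conj_mul_conj _ _ _ _ hPP']
  have hτone : τ 1 = 1 := by
    simp only [hτdef, hσone, Matrix.mul_one]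
    exact hP'P
  have hτinj : ∀ g₁ g₂, τ g₁ = τ g₂ → g₁ = g₂ := by
    intro g₁ g₂ h
    exact hσinj _ _ (conj_inj _ _ _ _ hPP' h)
  set c : ℝ → ℝ := fun t => M 1 0 * σ (uu t) 0 1 with hcdef
  have hτu : ∀ t, τ (uu t) = !![1, c t; 0, 1] := by
    intro t
    simp only [hτdef, hcdef]
    rw [hform t]
    ext i j
    fin_cases i <;> fin_cases j <;>
      simp [hPdef, hP'def, Matrix.mul_apply, Fin.sum_univ_two] <;> field_simp <;> ring
  have hCadd : ∀ s t, c (s + t) = c s + c t := by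
    intro s t
    simp only [hcdef, hcadd s t]; ring
  have hC0 : c 0 = 0 := by simp only [hcdef, hc0, mul_zero]
  have hCneg : ∀ t, c (-t) = -(c t) := by
    intro t
    simp only [hcdef, hcneg t]; ring
  have hτl1 : τ (ll 1) = !![1, 0; 1, 1] := by
    have h1 : σ (ll 1) * P = P * (1 + !![0, 0; 1, 0]) := by
      rw [Matrix.mul_add, Matrix.mul_one, hTM, Matrix.add_mul, Matrix.one_mul, hMP]
    have h2 : (1 : M2) + !![0, 0; 1, 0] = !![1, 0; 1, 1] := by
      ext i j
      fin_cases i <;> fin_cases j <;> simp [Matrix.add_apply, Matrix.one_apply]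
    simp only [hτdef]
    rw [Matrix.mul_assoc, h1, ← Matrix.mul_assoc, hP'P, Matrix.one_mul, h2]
  have hτlm1 : τ (ll (-1)) = !![1, 0; -1, 1] := by
    have h1 : τ (ll 1) * τ (ll (-1)) = 1 := by
      rw [← hτmul, ll_mul]
      norm_num
      rw [ll_zero, hτone]
    have h2 : (!![1, 0; -1, 1] : M2) * τ (ll 1) = 1 := by
      rw [hτl1]
      ext i j
      fin_cases i <;> fin_cases j <;>
        simp [Matrix.mul_apply, Fin.sum_univ_two, Matrix.one_apply]
    calc τ (ll (-1)) = (!![1, 0; -1, 1] * τ (ll 1)) * τ (ll (-1)) := by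
          rw [h2, Matrix.one_mul]
      _ = !![1, 0; -1, 1] * (τ (ll 1) * τ (ll (-1))) := by
          simp only [Matrix.mul_assoc]
      _ = !![1, 0; -1, 1] := by rw [h1, Matrix.mul_one]
  -- k = 1
  have hC1 : c 1 = 1 := by
    have hrel := congrArg τ (rel_w 1)
    rw [hτmul, hτmul, hτmul, hτmul, hτmul, hτmul] at hrel
    rw [hτl1, hτlm1, hτu 1, hτu (-1), hCneg 1] at hrel
    have := congrFun (congrFun hrel 1) 0
    simp [Matrix.mul_apply, Fin.sum_univ_two, Matrix.add_apply, Matrix.sub_apply,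
      Matrix.one_apply] at this
    linarith
  -- form of τ (ll t)
  have hτw : τ (uu 1 * ll (-1) * uu 1) = !![0, 1; -1, 0] := by
    rw [hτmul, hτmul, hτu 1, hτlm1, hC1]
    ext i j
    fin_cases i <;> fin_cases j <;>
      simp [Matrix.mul_apply, Fin.sum_univ_two]
  have hτl : ∀ t, τ (ll t) = !![1, 0; c t, 1] := by
    intro t
    have hrel := congrArg τ (rel_w t)
    rw [hτmul, hτw, hτmul, hτw, hτu (-t), hCneg t] at hrel
    have hWW : (!![0, 1; -1, 0] : M2) * !![0, -1; 1, 0] = 1 := by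
      ext i j
      fin_cases i <;> fin_cases j <;>
        simp [Matrix.mul_apply, Fin.sum_univ_two, Matrix.one_apply]
    calc τ (ll t) = (τ (ll t) * !![0, 1; -1, 0]) * !![0, -1; 1, 0] := by
          rw [Matrix.mul_assoc, hWW, Matrix.mul_one]
      _ = (!![0, 1; -1, 0] * !![1, -(c t); 0, 1]) * !![0, -1; 1, 0] := by rw [hrel]
      _ = !![1, 0; c t, 1] := by
          ext i j
          fin_cases i <;> fin_cases j <;>
            simp [Matrix.mul_apply, Fin.sum_univ_two]
  -- determinant of τ
  have hτdet : ∀ g, (τ g).det = 1 := by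
    intro g
    simp only [hτdef, Matrix.det_mul, hσdet g, mul_one]
    have hP'd : P'.det = (M 1 0)⁻¹ := by
      simp only [hP'def, Matrix.det_fin_two_of]; ring
    have hPd : P.det = M 1 0 := by
      simp only [hPdef, Matrix.det_fin_two_of]; ring
    rw [hP'd, hPd]
    field_simp
  -- multiplicativity of c
  have hmul2 : ∀ x t : ℝ, 0 < x → c (x * t) = c x * c t := by
    intro x t hx
    have hl : Real.sqrt x ≠ 0 := ne_of_gt (Real.sqrt_pos.2 hx)
    set D := τ (dd (Real.sqrt x) hl) with hDdef
    have hDrel : ∀ s : ℝ, D * !![1, c s; 0, 1] = !![1, c (x * s); 0, 1] * D := by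
      intro s
      have h := congrArg τ (dd_uu (Real.sqrt x) hl s)
      rw [hτmul, hτmul, hτu s, hτu (Real.sqrt x * Real.sqrt x * s)] at h
      rw [Real.mul_self_sqrt hx.le] at h
      exact h
    have hD10 : D 1 0 = 0 := by
      have h := congrFun (congrFun (hDrel 1) 1) 1
      simp [Matrix.mul_apply, Fin.sum_univ_two, hC1] at h
      linarith
    have hDdet : D 0 0 * D 1 1 = 1 := by
      have h := hτdet (dd (Real.sqrt x) hl)
      rw [Matrix.det_fin_two] at h
      rw [← hDdef] at h
      rw [hD10] at h
      linarith
    have hD11 : D 1 1 ≠ 0 := by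
      intro h; rw [h, mul_zero] at hDdet; norm_num at hDdet
    have hD00 : D 0 0 = c x * D 1 1 := by
      have h := congrFun (congrFun (hDrel 1) 0) 1
      simp [Matrix.mul_apply, Fin.sum_univ_two, hC1, mul_one] at h
      linarith
    have h := congrFun (congrFun (hDrel t) 0) 1
    simp [Matrix.mul_apply, Fin.sum_univ_two, hD10] at h
    have h' : D 0 0 * c t = c (x * t) * D 1 1 := by linarith
    rw [hD00] at h'
    have : (c x * c t) * D 1 1 = c (x * t) * D 1 1 := by linarith [h']
    exact (mul_right_cancel₀ hD11 this).symm
  have hCmul : ∀ x t : ℝ, c (x * t) = c x * c t := by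
    intro x t
    rcases lt_trichotomy x 0 with hx | hx | hx
    · have h1 : c (-x * t) = c (-x) * c t := hmul2 _ _ (by linarith)
      rw [hCneg x] at h1
      have h2 : -x * t = -(x * t) := by ring
      rw [h2, hCneg (x * t)] at h1
      linarith [h1]
    · rw [hx, zero_mul, hC0, zero_mul]
    · exact hmul2 x t hx
  have hCid : ∀ t, c t = t := by
    let F : ℝ →+* ℝ :=
      { toFun := c
        map_one' := hC1
        map_mul' := hCmul
        map_zero' := hC0
        map_add' := hCadd }
    intro t
    exact RingHom.congr_fun (Subsingleton.elim F (RingHom.id ℝ)) t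
  -- τ is the identity
  have hgen : ∀ g : SL(2, ℝ), τ g = ↑g := by
    apply SL2_generated (fun g => τ g = ↑g)
    · intro a b ha hb
      rw [hτmul, ha, hb, Matrix.SpecialLinearGroup.coe_mul]
    · intro t
      rw [hτu t, hCid t]
      rfl
    · intro t
      rw [hτl t, hCid t]
      rfl
  -- assemble h
  have hHinv1 : (Q * P) * (P' * Q⁻¹) = 1 := by
    calc (Q * P) * (P' * Q⁻¹) = Q * (P * P') * Q⁻¹ := by simp only [Matrix.mul_assoc]
      _ = 1 := by rw [hPP', Matrix.mul_one, hQQ']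
  have hHinv2 : (P' * Q⁻¹) * (Q * P) = 1 := by
    calc (P' * Q⁻¹) * (Q * P) = P' * (Q⁻¹ * Q) * P := by simp only [Matrix.mul_assoc]
      _ = 1 := by rw [hQQ, Matrix.mul_one, hP'P]
  refine ⟨⟨Q * P, P' * Q⁻¹, hHinv1, hHinv2⟩, ?_⟩
  intro g
  have hg := hgen g
  show ρ g = (Q * P) * ↑g * (P' * Q⁻¹)
  rw [← hg]
  simp only [hτdef, hσdef]
  calc ρ g = Q * (Q⁻¹ * ρ g * Q) * Q⁻¹ := by
        rw [show Q * (Q⁻¹ * ρ g * Q) * Q⁻¹ = (Q * Q⁻¹) * ρ g * (Q * Q⁻¹) from by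
          simp only [Matrix.mul_assoc], hQQ', Matrix.one_mul, Matrix.mul_one]
    _ = (Q * P) * (P' * (Q⁻¹ * ρ g * Q) * P) * (P' * Q⁻¹) := by
        rw [show (Q * P) * (P' * (Q⁻¹ * ρ g * Q) * P) * (P' * Q⁻¹)
            = Q * ((P * P') * (Q⁻¹ * ρ g * Q) * (P * P')) * Q⁻¹ from by
          simp only [Matrix.mul_assoc], hPP', Matrix.one_mul, Matrix.mul_one]
end

section
/- Let Λ be a full-rank lattice in C^g and L a complex linear subspace of C^g. If L is not contained in any complex hyperplane of the form {z : Σ_{i=1}^g conj(θ_i) z_i = 0} with θ ∈ Λ* nonzero, then L + Λ is dense in C^g. -/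
open Pointwise

open Filter Topology in

lemma discrete_of_no_line {F : Type*} [NormedAddCommGroup F] [NormedSpace ℝ F] [ProperSpace F]
    (K : AddSubgroup F) (hK : IsClosed (K : Set F))
    (h : ∀ x : F, (∀ t : ℝ, t • x ∈ K) → x = 0) :
    ∃ ε > 0, ∀ x ∈ K, ‖x‖ < ε → x = 0 := by
  by_contra hc
  push_neg at hc
  have hex : ∀ n : ℕ, ∃ x : F, x ∈ K ∧ ‖x‖ < 1 / (n + 1) ∧ x ≠ 0 := by
    intro n
    obtain ⟨x, hxK, hxn, hx0⟩ := hc (1 / (n + 1)) (by positivity)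
    exact ⟨x, hxK, hxn, hx0⟩
  choose x hxK hxn hx0 using hex
  set u : ℕ → F := fun n => ‖x n‖⁻¹ • x n with hu
  have hnormx : ∀ n, 0 < ‖x n‖ := fun n => norm_pos_iff.mpr (hx0 n)
  have husphere : ∀ n, u n ∈ Metric.sphere (0 : F) 1 := by
    intro n
    simp only [u, Metric.mem_sphere, dist_zero_right, norm_smul, norm_inv, norm_norm]
    field_simp [ne_of_gt (hnormx n)]
  obtain ⟨v, hv, φ, hφ, hvlim⟩ :=
    (isCompact_sphere (0 : F) 1).tendsto_subseq husphere
  have hv0 : v ≠ 0 := by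
    intro h0
    rw [h0] at hv
    simp at hv
  refine hv0 (h v ?_)
  intro t
  -- t • v is the limit of ⌊t / ‖x (φ n)‖⌋ • x (φ n)
  have hr0 : Tendsto (fun n => ‖x (φ n)‖) atTop (𝓝 0) := by
    have : ∀ n : ℕ, ‖x (φ n)‖ ≤ 1 / (n + 1) := by
      intro n
      calc ‖x (φ n)‖ ≤ 1 / (φ n + 1) := (hxn (φ n)).le
        _ ≤ 1 / (n + 1) := by
          apply one_div_le_one_div_of_le (by positivity)
          have hnn : (n : ℝ) ≤ (φ n : ℝ) := Nat.cast_le.mpr hφ.le_apply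
          linarith
    apply squeeze_zero (fun n => (hnormx (φ n)).le) this
    exact tendsto_one_div_add_atTop_nhds_zero_nat
  have hcoef : Tendsto (fun n => (⌊t / ‖x (φ n)‖⌋ : ℝ) * ‖x (φ n)‖) atTop (𝓝 t) := by
    have hbd : ∀ n, ‖(⌊t / ‖x (φ n)‖⌋ : ℝ) * ‖x (φ n)‖ - t‖ ≤ ‖x (φ n)‖ := by
      intro n
      have hr := hnormx (φ n)
      have h1 : (⌊t / ‖x (φ n)‖⌋ : ℝ) * ‖x (φ n)‖ - t
          = (((⌊t / ‖x (φ n)‖⌋ : ℝ)) - t / ‖x (φ n)‖) * ‖x (φ n)‖ := by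
        field_simp [ne_of_gt (hnormx n)]
      rw [h1, norm_mul, norm_norm]
      have h2 : ‖((⌊t / ‖x (φ n)‖⌋ : ℝ)) - t / ‖x (φ n)‖‖ ≤ 1 := by
        rw [Real.norm_eq_abs, abs_sub_comm, abs_of_nonneg (by linarith [Int.floor_le (t / ‖x (φ n)‖), Int.sub_one_lt_floor (t / ‖x (φ n)‖)] : (0:ℝ) ≤ t / ‖x (φ n)‖ - ⌊t / ‖x (φ n)‖⌋)]
        linarith [Int.sub_one_lt_floor (t / ‖x (φ n)‖)]
      nlinarith [norm_nonneg (x (φ n))]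
    have := squeeze_zero_norm hbd hr0
    have h3 := this.add_const t
    simpa using h3
  have hlim : Tendsto (fun n => (⌊t / ‖x (φ n)‖⌋ : ℤ) • x (φ n)) atTop (𝓝 (t • v)) := by
    have heq : ∀ n, (⌊t / ‖x (φ n)‖⌋ : ℤ) • x (φ n)
        = ((⌊t / ‖x (φ n)‖⌋ : ℝ) * ‖x (φ n)‖) • u (φ n) := by
      intro n
      rw [← Int.cast_smul_eq_zsmul ℝ]
      rw [mul_smul]
      congr 1
      rw [hu]
      simp only
      rw [smul_inv_smul₀ (ne_of_gt (hnormx (φ n)))]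
    simp only [heq]
    exact hcoef.smul hvlim
  exact hK.mem_of_tendsto hlim (Filter.Eventually.of_forall (fun n => K.zsmul_mem (hxK (φ n)) _))

/-- If a complex linear subspace `L ⊆ ℂ^g` is not contained in any complex
hyperplane `Σ conj(θᵢ) zᵢ = 0` with `θ` a nonzero element of the dual lattice
`Λ*`, then `L + Λ` is dense in `ℂ^g`. -/
theorem stmt15 (g : ℕ) (Λ : AddSubgroup (Fin g → ℂ)) [DiscreteTopology Λ]
    (hspan : Submodule.span ℝ (Λ : Set (Fin g → ℂ)) = ⊤)
    (L : Submodule ℂ (Fin g → ℂ))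
    (hfree : ∀ θ : Fin g → ℂ, θ ≠ 0 →
      (∀ l ∈ Λ, ∃ n : ℤ, (∑ i, θ i * (starRingEnd ℂ) (l i)).re = (n : ℝ)) →
      ¬ ((L : Set (Fin g → ℂ)) ⊆ {z | ∑ i, (starRingEnd ℂ) (θ i) * z i = 0})) :
    Dense ((L : Set (Fin g → ℂ)) + (Λ : Set (Fin g → ℂ))) := by
  classical
  set G : AddSubgroup (Fin g → ℂ) := (L.restrictScalars ℝ).toAddSubgroup ⊔ Λ with hGdef
  have htop : G.topologicalClosure = ⊤ := by
    by_contra hKne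
    set K := G.topologicalClosure with hKdef
    have hKclosed : IsClosed (K : Set (Fin g → ℂ)) := G.isClosed_topologicalClosure
    have hLK : ∀ z ∈ L, z ∈ K := fun z hz =>
      G.le_topologicalClosure (le_sup_left (α := AddSubgroup (Fin g → ℂ))
        (show z ∈ (L.restrictScalars ℝ).toAddSubgroup from hz))
    have hΛK : ∀ l ∈ Λ, l ∈ K := fun l hl =>
      G.le_topologicalClosure (le_sup_right (α := AddSubgroup (Fin g → ℂ)) hl)
    -- the maximal subspace contained in K
    set V : Submodule ℝ (Fin g → ℂ) :=
      { carrier := {x | ∀ t : ℝ, t • x ∈ K}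
        add_mem' := fun hx hy t => by rw [smul_add]; exact K.add_mem (hx t) (hy t)
        zero_mem' := fun t => by rw [smul_zero]; exact K.zero_mem
        smul_mem' := fun c x hx t => by rw [smul_smul]; exact hx (t * c) } with hVdef
    have hVK : ∀ x ∈ V, x ∈ K := fun x hx => by simpa using hx 1
    have hLV : ∀ z ∈ L, z ∈ V := fun z hz t =>
      hLK _ ((L.restrictScalars ℝ).smul_mem t hz)
    haveI hVclosed : IsClosed (V : Set (Fin g → ℂ)) := Submodule.closed_of_finiteDimensional V
    set π : (Fin g → ℂ) →ₗ[ℝ] ((Fin g → ℂ) ⧸ V) := V.mkQ with hπdef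
    set K' : AddSubgroup ((Fin g → ℂ) ⧸ V) := K.map π.toAddMonoidHom with hK'def
    have hmem : ∀ x : Fin g → ℂ, π x ∈ K' ↔ x ∈ K := by
      intro x
      constructor
      · rintro ⟨y, hyK, hyx⟩
        have : x - y ∈ V := by
          rw [← Submodule.Quotient.eq V]
          exact (hyx.symm : π x = π y)
        have := K.add_mem (hVK _ this) hyK
        simpa using this
      · intro hx; exact ⟨x, hx, rfl⟩
    have hK'closed : IsClosed (K' : Set ((Fin g → ℂ) ⧸ V)) := by
      rw [← (V.isOpenQuotientMap_mkQ).isQuotientMap.isClosed_preimage]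
      have : V.mkQ ⁻¹' (K' : Set ((Fin g → ℂ) ⧸ V)) = (K : Set (Fin g → ℂ)) := by
        ext x; exact hmem x
      rw [this]; exact hKclosed
    obtain ⟨ε, hε, hzero⟩ := discrete_of_no_line K' hK'closed (by
      intro x hx
      obtain ⟨y, rfl⟩ := V.mkQ_surjective x
      have hyV : y ∈ V := by
        intro t
        have := hx t
        rw [← map_smul] at this
        exact (hmem _).mp this
      rwa [Submodule.mkQ_apply, Submodule.Quotient.mk_eq_zero])
    set M : Submodule ℤ ((Fin g → ℂ) ⧸ V) := AddSubgroup.toIntSubmodule K' with hMdef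
    haveI : DiscreteTopology M := by
      refine discreteTopology_of_isOpen_singleton_zero ?_
      have h0 : ({0} : Set M) = (Subtype.val ⁻¹' Metric.ball (0 : (Fin g → ℂ) ⧸ V) ε) := by
        ext x
        simp only [Set.mem_singleton_iff, Set.mem_preimage, Metric.mem_ball, dist_zero_right]
        constructor
        · rintro rfl; simpa using hε
        · intro hx; exact Subtype.ext (hzero x.1 x.2 hx)
      rw [h0]; exact Metric.isOpen_ball.preimage continuous_subtype_val
    haveI : IsZLattice ℝ M := by
      constructor
      have hcoe : (M : Set ((Fin g → ℂ) ⧸ V)) = V.mkQ '' (K : Set (Fin g → ℂ)) := by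
        ext x
        simp only [SetLike.mem_coe, Set.mem_image]
        constructor
        · intro hx
          have hx' : x ∈ K' := by
            rw [← SetLike.mem_coe, ← AddSubgroup.coe_toIntSubmodule K'] at *
            exact hx
          obtain ⟨y, hy, hyx⟩ := hx'
          exact ⟨y, hy, hyx⟩
        · rintro ⟨y, hy, rfl⟩
          show V.mkQ y ∈ (AddSubgroup.toIntSubmodule K' : Set _)
          rw [AddSubgroup.coe_toIntSubmodule K']
          exact (hmem y).mpr hy
      rw [hcoe, ← Submodule.map_span]
      have hKspan : Submodule.span ℝ (K : Set (Fin g → ℂ)) = ⊤ := by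
        rw [eq_top_iff, ← hspan]
        exact Submodule.span_mono (fun l hl => hΛK l hl)
      rw [hKspan, Submodule.map_top, Submodule.range_mkQ]
    haveI : Module.Free ℤ M := ZLattice.module_free ℝ M
    haveI : Module.Finite ℤ M := ZLattice.module_finite ℝ M
    haveI : Nontrivial ((Fin g → ℂ) ⧸ V) := by
      obtain ⟨x, hx⟩ : ∃ x, x ∉ K := by
        by_contra hall
        push_neg at hall
        exact hKne ((AddSubgroup.eq_top_iff' K).mpr hall)
      refine ⟨π x, 0, fun h0 => hx ?_⟩
      have : x ∈ V := by rwa [hπdef, Submodule.mkQ_apply, Submodule.Quotient.mk_eq_zero] at h0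
      exact hVK x this
    set b := Module.Free.chooseBasis ℤ M with hbdef
    set bF := Module.Basis.ofZLatticeBasis ℝ M b with hbFdef
    haveI : Nonempty (Module.Free.ChooseBasisIndex ℤ M) := bF.index_nonempty
    set i₀ := Classical.arbitrary (Module.Free.ChooseBasisIndex ℤ M) with hi0def
    set f : (Fin g → ℂ) →ₗ[ℝ] ℝ := (bF.coord i₀) ∘ₗ π with hfdef
    have hfint : ∀ y ∈ K, ∃ n : ℤ, f y = n := by
      intro y hy
      refine ⟨b.repr ⟨π y, (show V.mkQ y ∈ AddSubgroup.toIntSubmodule K' from by rw [← SetLike.mem_coe, AddSubgroup.coe_toIntSubmodule K']; exact (hmem y).mpr hy)⟩ i₀, ?_⟩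
      have := Module.Basis.ofZLatticeBasis_repr_apply ℝ M b
        ⟨π y, (show V.mkQ y ∈ AddSubgroup.toIntSubmodule K' from by rw [← SetLike.mem_coe, AddSubgroup.coe_toIntSubmodule K']; exact (hmem y).mpr hy)⟩ i₀
      simp only [hfdef, LinearMap.comp_apply, Module.Basis.coord_apply]
      rw [← this]
    have hfV : ∀ x ∈ V, f x = 0 := by
      intro x hx
      have : π x = 0 := by rw [hπdef, Submodule.mkQ_apply, Submodule.Quotient.mk_eq_zero]; exact hx
      simp [hfdef, this]
    have hfne : ∃ y : Fin g → ℂ, f y = 1 := by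
      obtain ⟨y, hy⟩ := V.mkQ_surjective (bF i₀)
      refine ⟨y, ?_⟩
      simp only [hfdef, LinearMap.comp_apply]
      rw [show π y = bF i₀ from hy, Module.Basis.coord_apply, Module.Basis.repr_self, Finsupp.single_eq_same]
    set θ : Fin g → ℂ := fun i =>
      (f (Pi.single i 1) : ℂ) + (f (Pi.single i Complex.I) : ℂ) * Complex.I with hθdef
    have hθre : ∀ i, (θ i).re = f (Pi.single i 1) := by intro i; simp [hθdef]
    have hθim : ∀ i, (θ i).im = f (Pi.single i Complex.I) := by intro i; simp [hθdef]
    have hkey : ∀ z : Fin g → ℂ, (∑ i, θ i * (starRingEnd ℂ) (z i)).re = f z := by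
      intro z
      have hz : z = ∑ i, ((z i).re • (Pi.single i (1 : ℂ) : Fin g → ℂ) + (z i).im • (Pi.single i Complex.I : Fin g → ℂ)) := by
        funext j
        rw [Finset.sum_apply]
        simp only [Pi.add_apply, Pi.smul_apply, Pi.single_apply, smul_ite, smul_zero]
        rw [Finset.sum_congr rfl fun i _ => by rw [ite_add_ite, add_zero]]
        rw [Finset.sum_ite_eq Finset.univ j
          (fun i => (z i).re • (1 : ℂ) + (z i).im • Complex.I)]
        simp [Complex.real_smul, Complex.re_add_im]
      conv_rhs => rw [hz]
      rw [map_sum, Complex.re_sum]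
      refine Finset.sum_congr rfl fun i _ => ?_
      rw [map_add, map_smul, map_smul, smul_eq_mul, smul_eq_mul,
        Complex.mul_re, Complex.conj_re, Complex.conj_im, hθre, hθim]
      ring
    have hθ0 : θ ≠ 0 := by
      intro h0
      obtain ⟨y, hy⟩ := hfne
      have := hkey y
      rw [h0] at this
      simp at this
      rw [hy] at this
      norm_num at this
    have hint : ∀ l ∈ Λ, ∃ n : ℤ, (∑ i, θ i * (starRingEnd ℂ) (l i)).re = (n : ℝ) := by
      intro l hl
      rw [hkey l]
      exact hfint l (hΛK l hl)
    refine hfree θ hθ0 hint ?_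
    intro z hz
    have hfz : ∀ w ∈ L, f w = 0 := fun w hw => hfV w (hLV w hw)
    have h1 : (∑ i, θ i * (starRingEnd ℂ) (z i)) = 0 := by
      have hre := hkey z
      rw [hfz z hz] at hre
      have him' := hkey (Complex.I • z)
      rw [hfz _ (L.smul_mem Complex.I hz)] at him'
      have him : (∑ i, θ i * (starRingEnd ℂ) (z i)).im = 0 := by
        rw [← him', Complex.im_sum, Complex.re_sum]
        refine Finset.sum_congr rfl fun i _ => ?_
        simp only [Pi.smul_apply, smul_eq_mul, map_mul, Complex.mul_re, Complex.mul_im,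
          Complex.conj_re, Complex.conj_im, Complex.I_re, Complex.I_im]
        ring
      exact Complex.ext hre him
    show (∑ i, (starRingEnd ℂ) (θ i) * z i) = 0
    have h2 : (∑ i, (starRingEnd ℂ) (θ i) * z i)
        = (starRingEnd ℂ) (∑ i, θ i * (starRingEnd ℂ) (z i)) := by
      rw [map_sum]
      exact Finset.sum_congr rfl fun i _ => by rw [map_mul, Complex.conj_conj]
    rw [h2, h1, map_zero]
  -- conclude density
  have hset : (L : Set (Fin g → ℂ)) + (Λ : Set (Fin g → ℂ)) = (G : Set (Fin g → ℂ)) := by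
    rw [hGdef, AddSubgroup.add_normal]
    rfl
  rw [hset, dense_iff_closure_eq]
  have : closure (G : Set (Fin g → ℂ)) = (G.topologicalClosure : Set (Fin g → ℂ)) := rfl
  rw [this, htop]
  rfl
end
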